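/- arXiv:1803.07514 — 4 statements merged into one kernel-verified Lean document; each statement's English description precedes it below -/
import Mathlib

section
/- Let (Ω, F, P) be a probability space with random variables Y : Ω → ℝ (integrable), D, Z : Ω → {0,1}, and ε : Ω → E, such that Y = g(D, ε) for a measurable function g and Z is independent of ε. Suppose the homogeneity hypothesis holds: g(1,e) − g(0,e) = δ₀ for a constant δ₀ and all e. If P(D=1|Z=1) ≠ P(D=1|Z=0), then δ₀ = (E[Y|Z=1] − E[Y|Z=0]) / (P(D=1|Z=1) − P(D=1|Z=0)) = Cov(Y,Z)/Cov(D,Z). -/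
/-!
Homogeneity gives `Y = g(0, ε) + δ₀ · 1{D = 1}`, and `g(0, ε)` is independent of `Z`, so
`E[Y; Z = z] = δ₀ P(D = 1, Z = z) + E[g(0, ε)] P(Z = z)`. Dividing by `P(Z = z)` and taking the
difference over `z` eliminates the unknown `E[g(0, ε)]`, which gives the Wald ratio. Each
covariance with `Z` is `P(Z = 1) P(Z = 0)` times the corresponding difference of conditional
means, so the covariance ratio is the same quotient.
-/

open MeasureTheory ProbabilityTheory

section Algebra

variable {p₁ p₀ q₁ q₀ a₁ a₀ : ℝ}

theorem eq_wald_ratio {δ μ : ℝ} (h₁ : a₁ = δ * p₁ + q₁ * μ) (h₀ : a₀ = δ * p₀ + q₀ * μ)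
    (hq₁ : q₁ ≠ 0) (hq₀ : q₀ ≠ 0) (hp : p₁ / q₁ ≠ p₀ / q₀) :
    δ = (a₁ / q₁ - a₀ / q₀) / (p₁ / q₁ - p₀ / q₀) := by
  have hnum : a₁ / q₁ - a₀ / q₀ = δ * (p₁ / q₁ - p₀ / q₀) := by
    subst h₁ h₀
    field_simp
    ring
  rw [hnum, mul_div_cancel_right₀ _ (sub_ne_zero.mpr hp)]

theorem covariance_ratio_eq_wald_ratio (hq : q₁ + q₀ = 1) (hq₁ : q₁ ≠ 0) (hq₀ : q₀ ≠ 0) :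
    (a₁ - (a₁ + a₀) * q₁) / (p₁ - (p₁ + p₀) * q₁) =
      (a₁ / q₁ - a₀ / q₀) / (p₁ / q₁ - p₀ / q₀) := by
  have hcov : ∀ x₁ x₀ : ℝ, x₁ - (x₁ + x₀) * q₁ = q₁ * q₀ * (x₁ / q₁ - x₀ / q₀) := by
    intro x₁ x₀
    field_simp
    linear_combination -x₁ * hq
  rw [hcov, hcov, mul_div_mul_left _ _ (mul_ne_zero hq₁ hq₀)]

theorem apply_eq_apply_false_add_mul_ite {E R : Type*} [Ring R] {g : Bool → E → R} {δ : R}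
    (hg : ∀ e, g true e - g false e = δ) (d : Bool) (e : E) :
    g d e = g false e + δ * if d then 1 else 0 := by
  cases d
  · simp
  · simpa using (sub_eq_iff_eq_add'.mp (hg e))

end Algebra

section Integrals

variable {Ω : Type*} [MeasurableSpace Ω] {μ : Measure Ω}

omit [MeasurableSpace Ω] in
theorem ite_eq_indicator_one (D : Ω → Bool) :
    (fun ω => if D ω then (1 : ℝ) else 0) = {ω | D ω = true}.indicator 1 := by
  ext ω; by_cases h : D ω <;> simp [h]

omit [MeasurableSpace Ω] in
theorem compl_setOf_eq_true (D : Ω → Bool) : {ω | D ω = true}ᶜ = {ω | D ω = false} := by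
  ext ω
  simp

section BoolValued

variable {D : Ω → Bool} (hD : MeasurableSet {ω | D ω = true})
include hD

theorem integrable_ite_one [IsFiniteMeasure μ] :
    Integrable (fun ω => if D ω then (1 : ℝ) else 0) μ := by
  rw [ite_eq_indicator_one]
  exact (integrable_const 1).indicator hD

theorem integral_ite_eq_measureReal :
    ∫ ω, (if D ω then (1 : ℝ) else 0) ∂μ = μ.real {ω | D ω = true} := by
  rw [ite_eq_indicator_one, integral_indicator_one hD]

theorem setIntegral_ite_eq_measureReal (s : Set Ω) :
    ∫ ω in s, (if D ω then (1 : ℝ) else 0) ∂μ = μ.real ({ω | D ω = true} ∩ s) := by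
  rw [integral_ite_eq_measureReal hD, measureReal_restrict_apply hD]

theorem integral_mul_ite_eq_setIntegral (f : Ω → ℝ) :
    ∫ ω, f ω * (if D ω then (1 : ℝ) else 0) ∂μ = ∫ ω in {ω | D ω = true}, f ω ∂μ := by
  rw [← integral_indicator hD]
  congr 1 with ω
  by_cases h : D ω <;> simp [h]

theorem integral_eq_setIntegral_true_add_setIntegral_false {f : Ω → ℝ} (hf : Integrable f μ) :
    ∫ ω, f ω ∂μ = ∫ ω in {ω | D ω = true}, f ω ∂μ + ∫ ω in {ω | D ω = false}, f ω ∂μ := by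
  rw [← integral_add_compl hD hf, compl_setOf_eq_true D]

theorem measureReal_true_add_measureReal_false [IsProbabilityMeasure μ] :
    μ.real {ω | D ω = true} + μ.real {ω | D ω = false} = 1 := by
  rw [← probReal_add_probReal_compl (μ := μ) hD, compl_setOf_eq_true D]

end BoolValued

theorem ProbabilityTheory.IndepFun.setIntegral_preimage {β : Type*} [MeasurableSpace β]
    {Z : Ω → β} {X : Ω → ℝ} (hind : IndepFun Z X μ) (hZ : Measurable Z)
    (hX : AEStronglyMeasurable X μ) {T : Set β} (hT : MeasurableSet T) :
    ∫ ω in Z ⁻¹' T, X ω ∂μ = μ.real (Z ⁻¹' T) * ∫ ω, X ω ∂μ := by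
  have hφ : Measurable (T.indicator (1 : β → ℝ)) := measurable_one.indicator hT
  have h : ∫ ω, T.indicator 1 (Z ω) * X ω ∂μ =
      (∫ ω, T.indicator (1 : β → ℝ) (Z ω) ∂μ) * ∫ ω, X ω ∂μ :=
    (hind.comp hφ measurable_id).integral_fun_mul_eq_mul_integral
      (hφ.comp hZ).aestronglyMeasurable hX
  have hprod : (fun ω => T.indicator 1 (Z ω) * X ω) = (Z ⁻¹' T).indicator X := by
    ext ω; by_cases hω : Z ω ∈ T <;> simp [hω]
  have hone : (fun ω => T.indicator (1 : β → ℝ) (Z ω)) = (Z ⁻¹' T).indicator 1 := by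
    ext ω; by_cases hω : Z ω ∈ T <;> simp [hω]
  rwa [hprod, hone, integral_indicator (hZ hT), integral_indicator_one (hZ hT)] at h

theorem ProbabilityTheory.IndepFun.setIntegral_preimage_add_mul_ite [IsFiniteMeasure μ]
    {β : Type*} [MeasurableSpace β] {Z : Ω → β} {X : Ω → ℝ} {D : Ω → Bool}
    (hind : IndepFun Z X μ) (hZ : Measurable Z) (hX : Integrable X μ)
    (hD : MeasurableSet {ω | D ω = true}) (δ : ℝ) {T : Set β} (hT : MeasurableSet T) :
    ∫ ω in Z ⁻¹' T, X ω + δ * (if D ω then 1 else 0) ∂μ =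
      δ * μ.real ({ω | D ω = true} ∩ Z ⁻¹' T) + μ.real (Z ⁻¹' T) * ∫ ω, X ω ∂μ := by
  rw [integral_add hX.integrableOn ((integrable_ite_one hD).const_mul δ).integrableOn,
    integral_const_mul, setIntegral_ite_eq_measureReal hD,
    hind.setIntegral_preimage hZ hX.aestronglyMeasurable hT, add_comm]

end Integrals

theorem late_identification_homogeneous_general
    {Ω : Type*} [MeasurableSpace Ω] (P : Measure Ω) [IsProbabilityMeasure P]
    {E : Type*} [MeasurableSpace E]
    (Y : Ω → ℝ) (D Z : Ω → Bool) (ε : Ω → E)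
    (g : Bool → E → ℝ) (δ₀ : ℝ)
    (hYint : Integrable Y P)
    (hD : Measurable D) (hZ : Measurable Z)
    (hg : ∀ d, Measurable (g d))
    (hstruct : ∀ ω, Y ω = g (D ω) (ε ω))
    (hindep : IndepFun Z ε P)
    (hhom : ∀ e, g true e - g false e = δ₀)
    (hZ1 : 0 < P {ω | Z ω = true}) (hZ0 : 0 < P {ω | Z ω = false})
    (hrel :
      (P {ω | D ω = true ∧ Z ω = true}).toReal / (P {ω | Z ω = true}).toReal ≠
      (P {ω | D ω = true ∧ Z ω = false}).toReal / (P {ω | Z ω = false}).toReal) :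
    δ₀ =
      ((∫ ω in {ω | Z ω = true}, Y ω ∂P) / (P {ω | Z ω = true}).toReal -
        (∫ ω in {ω | Z ω = false}, Y ω ∂P) / (P {ω | Z ω = false}).toReal) /
      ((P {ω | D ω = true ∧ Z ω = true}).toReal / (P {ω | Z ω = true}).toReal -
        (P {ω | D ω = true ∧ Z ω = false}).toReal / (P {ω | Z ω = false}).toReal) ∧
    δ₀ =
      ((∫ ω, Y ω * (if Z ω then (1:ℝ) else 0) ∂P) -
        (∫ ω, Y ω ∂P) * (∫ ω, (if Z ω then (1:ℝ) else 0) ∂P)) /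
      ((∫ ω, (if D ω then (1:ℝ) else 0) * (if Z ω then (1:ℝ) else 0) ∂P) -
        (∫ ω, (if D ω then (1:ℝ) else 0) ∂P) * (∫ ω, (if Z ω then (1:ℝ) else 0) ∂P)) := by
  simp only [← measureReal_def, Set.ofPred_and] at hrel ⊢
  have hZset (z : Bool) : MeasurableSet {ω | Z ω = z} := hZ (measurableSet_singleton z)
  have hDset : MeasurableSet {ω | D ω = true} := hD (measurableSet_singleton true)
  have hq₁ : P.real {ω | Z ω = true} ≠ 0 := (ENNReal.toReal_pos hZ1.ne' (measure_ne_top P _)).ne'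
  have hq₀ : P.real {ω | Z ω = false} ≠ 0 := (ENNReal.toReal_pos hZ0.ne' (measure_ne_top P _)).ne'
  have hY : Y = fun ω => g false (ε ω) + δ₀ * if D ω then 1 else 0 :=
    funext fun ω => (hstruct ω).trans (apply_eq_apply_false_add_mul_ite hhom _ _)
  have hXint : Integrable (fun ω => g false (ε ω)) P :=
    (hYint.sub ((integrable_ite_one hDset).const_mul δ₀)).congr
      (.of_forall fun ω => by simp [hY])
  have hsetY (z : Bool) : ∫ ω in {ω | Z ω = z}, Y ω ∂P =
      δ₀ * P.real ({ω | D ω = true} ∩ {ω | Z ω = z}) +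
        P.real {ω | Z ω = z} * ∫ ω, g false (ε ω) ∂P := by
    rw [hY]
    exact (hindep.comp measurable_id (hg false)).setIntegral_preimage_add_mul_ite hZ hXint hDset
      δ₀ (measurableSet_singleton z)
  have hwald := eq_wald_ratio (hsetY true) (hsetY false) hq₁ hq₀ hrel
  refine ⟨hwald, ?_⟩
  rw [integral_mul_ite_eq_setIntegral (hZset true), integral_mul_ite_eq_setIntegral (hZset true),
    integral_eq_setIntegral_true_add_setIntegral_false (hZset true) hYint,
    integral_eq_setIntegral_true_add_setIntegral_false (hZset true) (integrable_ite_one (μ := P) hDset),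
    setIntegral_ite_eq_measureReal hDset, setIntegral_ite_eq_measureReal hDset,
    integral_ite_eq_measureReal (hZset true),
    covariance_ratio_eq_wald_ratio (measureReal_true_add_measureReal_false (hZset true)) hq₁ hq₀]
  exact hwald

/-- LATE identification under homogeneous treatment effects (no covariates):
`δ₀` equals the Wald ratio and the covariance ratio. -/
theorem late_identification_homogeneous
    {Ω : Type*} [MeasurableSpace Ω] (P : Measure Ω) [IsProbabilityMeasure P]
    {E : Type*} [MeasurableSpace E]
    (Y : Ω → ℝ) (D Z : Ω → Bool) (ε : Ω → E)
    (g : Bool → E → ℝ) (δ₀ : ℝ)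
    (hYint : Integrable Y P)
    (hD : Measurable D) (hZ : Measurable Z) (hε : Measurable ε)
    (hg : ∀ d, Measurable (g d))
    (hstruct : ∀ ω, Y ω = g (D ω) (ε ω))
    (hindep : IndepFun Z ε P)
    (hhom : ∀ e, g true e - g false e = δ₀)
    (hZ1 : 0 < P {ω | Z ω = true}) (hZ0 : 0 < P {ω | Z ω = false})
    (hrel :
      (P {ω | D ω = true ∧ Z ω = true}).toReal / (P {ω | Z ω = true}).toReal ≠
      (P {ω | D ω = true ∧ Z ω = false}).toReal / (P {ω | Z ω = false}).toReal) :
    δ₀ =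
      ((∫ ω in {ω | Z ω = true}, Y ω ∂P) / (P {ω | Z ω = true}).toReal -
        (∫ ω in {ω | Z ω = false}, Y ω ∂P) / (P {ω | Z ω = false}).toReal) /
      ((P {ω | D ω = true ∧ Z ω = true}).toReal / (P {ω | Z ω = true}).toReal -
        (P {ω | D ω = true ∧ Z ω = false}).toReal / (P {ω | Z ω = false}).toReal) ∧
    δ₀ =
      ((∫ ω, Y ω * (if Z ω then (1:ℝ) else 0) ∂P) -
        (∫ ω, Y ω ∂P) * (∫ ω, (if Z ω then (1:ℝ) else 0) ∂P)) /
      ((∫ ω, (if D ω then (1:ℝ) else 0) * (if Z ω then (1:ℝ) else 0) ∂P) -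
        (∫ ω, (if D ω then (1:ℝ) else 0) ∂P) * (∫ ω, (if Z ω then (1:ℝ) else 0) ∂P)) :=
  late_identification_homogeneous_general P Y D Z ε g δ₀ hYint hD hZ hg hstruct hindep hhom hZ1 hZ0
    hrel
end

section
/- Suppose Y = g̃(D, ν(ε)) where g̃(d, ·) is strictly increasing and continuous for d ∈ {0,1} with g̃(1,·) a bijection from ℝ onto its image, D = 1[θ(Z) ≥ η], θ(0) < θ(1), Z ∈ {0,1} with 0 < P(Z=1) < 1 and Z independent of (ε, η), and assume the support of V := ν(ε) conditional on the complier event {θ(0) < η ≤ θ(1)} equals the support of V (an interval), with the conditional CDF of V given the complier event strictly increasing on that support. Let δ := (E[Y|Z=1] − E[Y|Z=0]) / (P(D=1|Z=1) − P(D=1|Z=0)) and W := Y + (1−D)δ. If W is independent of Z, then g̃(1, τ) − g̃(0, τ) = δ for all τ in the support of V. -/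
open MeasureTheory ProbabilityTheory

/-- The (topological) support of a measure on `ℝ`. -/
def msupport (μ : MeasureTheory.Measure ℝ) : Set ℝ :=
  {x | ∀ U ∈ nhds x, 0 < μ U}

/-!
Put `V = ν ∘ ε` and let `s(z, v, η)` be `g̃(1, v)` if `η ≤ θ(z)` and `g̃(0, v) + δ` otherwise, so that
`W = s(Z, V, η)`. Since `Z` is independent both of `(V, η)` and of `W`, the variables `s(1, V, η)` and
`s(0, V, η)` both have the law of `W`. They coincide off the complier event, hence on the compliers
`g̃(1, V)` and `g̃(0, V) + δ` have the same law. Finally, two continuous strictly increasing maps that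
push a measure forward to the same law agree on its support, because where they differ the
distribution function would be flat.
-/

open Set

section Support

variable {μ : Measure ℝ} [IsFiniteMeasure μ]

lemma measure_Ioc_eq_zero_of_measure_Iic_le {s t : ℝ} (hst : s ≤ t)
    (h : μ (Iic t) ≤ μ (Iic s)) : μ (Ioc s t) = 0 := by
  have hIoc : Ioc s t = Iic t \ Iic s := by ext; simp [and_comm]
  rw [hIoc, measure_sdiff (Iic_subset_Iic.mpr hst) measurableSet_Iic.nullMeasurableSet
    (measure_ne_top μ _)]
  exact tsub_eq_zero_of_le h

lemma StrictMono.preimage_Iic_apply {φ : ℝ → ℝ} (hφ : StrictMono φ) (τ : ℝ) :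
    φ ⁻¹' Iic (φ τ) = Iic τ :=
  ext fun _ => hφ.le_iff_le

lemma not_lt_of_map_eq_of_mem_msupport {φ ψ : ℝ → ℝ} (hφ : StrictMono φ) (hψ : StrictMono ψ)
    (hφc : Continuous φ) (hψc : Continuous ψ) (h : μ.map φ = μ.map ψ) {τ : ℝ}
    (hτ : τ ∈ msupport μ) : ¬ φ τ < ψ τ := by
  intro hlt
  obtain ⟨s, hs, hsτ⟩ : ∃ s, φ τ < ψ s ∧ s < τ :=
    ((hψc.tendsto τ).eventually (lt_mem_nhds hlt) |>.filter_mono nhdsWithin_le_nhds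
      |>.and (self_mem_nhdsWithin (s := Iio τ))).exists
  obtain ⟨t, ht, hτt⟩ : ∃ t, φ t < ψ τ ∧ τ < t :=
    ((hφc.tendsto τ).eventually (gt_mem_nhds hlt) |>.filter_mono nhdsWithin_le_nhds
      |>.and (self_mem_nhdsWithin (s := Ioi τ))).exists
  have hcdf : ∀ a, μ (φ ⁻¹' Iic a) = μ (ψ ⁻¹' Iic a) := fun a => by
    rw [← Measure.map_apply hφc.measurable measurableSet_Iic, h,
      Measure.map_apply hψc.measurable measurableSet_Iic]
  have hleft : μ (Iic τ) ≤ μ (Iic s) := calc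
    μ (Iic τ) = μ (ψ ⁻¹' Iic (φ τ)) := by rw [← hcdf, hφ.preimage_Iic_apply]
    _ ≤ μ (Iic s) := measure_mono fun x hx => (hψ.lt_iff_lt.mp ((mem_Iic.mp hx).trans_lt hs)).le
  have hright : μ (Iic t) ≤ μ (Iic τ) := calc
    μ (Iic t) ≤ μ (φ ⁻¹' Iic (ψ τ)) := measure_mono fun x hx => (hφ.monotone hx).trans ht.le
    _ = μ (Iic τ) := by rw [hcdf, hψ.preimage_Iic_apply]
  exact (hτ _ (Ioc_mem_nhds hsτ hτt)).ne'
    (measure_Ioc_eq_zero_of_measure_Iic_le (hsτ.trans hτt).le (hright.trans hleft))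

lemma eq_of_map_eq_of_mem_msupport {φ ψ : ℝ → ℝ} (hφ : StrictMono φ) (hψ : StrictMono ψ)
    (hφc : Continuous φ) (hψc : Continuous ψ) (h : μ.map φ = μ.map ψ) {τ : ℝ}
    (hτ : τ ∈ msupport μ) : φ τ = ψ τ :=
  le_antisymm (not_lt.mp (not_lt_of_map_eq_of_mem_msupport hψ hφ hψc hφc h.symm hτ))
    (not_lt.mp (not_lt_of_map_eq_of_mem_msupport hφ hψ hφc hψc h hτ))

end Support

lemma measure_preimage_ne_zero_of_pos_of_lt_one {Ω : Type*} [MeasurableSpace Ω] {P : Measure Ω}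
    [IsProbabilityMeasure P] {Z : Ω → Bool} (hZ : Measurable Z) (h₀ : 0 < P (Z ⁻¹' {true})) (h₁ : P (Z ⁻¹' {true}) < 1) :
    ∀ z, P (Z ⁻¹' {z}) ≠ 0
  | true => h₀.ne'
  | false => by
    rw [show Z ⁻¹' {false} = (Z ⁻¹' {true})ᶜ by ext; simp,
      prob_compl_eq_one_sub (hZ (measurableSet_singleton true))]
    exact (tsub_pos_of_lt h₁).ne'

section Independence

variable {Ω α β γ : Type*} [MeasurableSpace Ω] [MeasurableSpace α] [MeasurableSpace β]
  [MeasurableSpace γ] {P : Measure Ω} [IsFiniteMeasure P] {Z : Ω → α} {X : Ω → β} {W : Ω → γ}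
  {f : α → β → γ}

lemma measure_preimage_eq_of_indepFun (hZX : IndepFun Z X P) (hWZ : IndepFun W Z P)
    (hW : ∀ ω, W ω = f (Z ω) (X ω)) {z : α} (hz : MeasurableSet {z}) (hPz : P (Z ⁻¹' {z}) ≠ 0)
    (hf : Measurable (f z)) {s : Set γ} (hs : MeasurableSet s) :
    P (W ⁻¹' s) = P ((f z ∘ X) ⁻¹' s) := by
  have hslice : W ⁻¹' s ∩ Z ⁻¹' {z} = Z ⁻¹' {z} ∩ X ⁻¹' (f z ⁻¹' s) := by
    ext ω
    simp only [mem_inter_iff, mem_preimage, mem_singleton_iff, hW]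
    constructor
    · rintro ⟨hω, rfl⟩; exact ⟨rfl, hω⟩
    · rintro ⟨rfl, hω⟩; exact ⟨hω, rfl⟩
  refine (ENNReal.mul_left_inj hPz (measure_ne_top P _)).mp ?_
  rw [← hWZ.measure_inter_preimage_eq_mul _ _ hs hz, hslice,
    hZX.measure_inter_preimage_eq_mul _ _ hz (hf hs), mul_comm, preimage_comp]

lemma map_eq_map_of_indepFun [MeasurableSingletonClass α] (hZX : IndepFun Z X P)
    (hWZ : IndepFun W Z P) (hW : ∀ ω, W ω = f (Z ω) (X ω)) (hX : Measurable X)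
    (hf : ∀ z, Measurable (f z)) {z₁ z₂ : α} (hz₁ : P (Z ⁻¹' {z₁}) ≠ 0)
    (hz₂ : P (Z ⁻¹' {z₂}) ≠ 0) :
    P.map (f z₁ ∘ X) = P.map (f z₂ ∘ X) := by
  ext s hs
  rw [Measure.map_apply ((hf z₁).comp hX) hs, Measure.map_apply ((hf z₂).comp hX) hs,
    ← measure_preimage_eq_of_indepFun hZX hWZ hW (measurableSet_singleton _) hz₁ (hf z₁) hs,
    measure_preimage_eq_of_indepFun hZX hWZ hW (measurableSet_singleton _) hz₂ (hf z₂) hs]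

end Independence

lemma measure_inter_eq_of_diff_eq {α : Type*} [MeasurableSpace α] {μ : Measure α}
    [IsFiniteMeasure μ] {A B C : Set α} (hC : MeasurableSet C) (hAB : μ A = μ B)
    (hdiff : A \ C = B \ C) : μ (A ∩ C) = μ (B ∩ C) := by
  rw [← measure_inter_add_sdiff A hC, ← measure_inter_add_sdiff B hC, hdiff] at hAB
  exact (ENNReal.add_left_inj (measure_ne_top μ _)).mp hAB

section SelectedOutcome

variable (θ : Bool → ℝ) (y₁ y₀ : ℝ → ℝ)

/-- `p = (v, η)` pairs the outcome index with the selection unobservable. -/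
noncomputable def selectedOutcome (z : Bool) (p : ℝ × ℝ) : ℝ :=
  if p.2 ≤ θ z then y₁ p.1 else y₀ p.1

variable {θ y₁ y₀}

lemma measurable_selectedOutcome (hy₁ : Measurable y₁) (hy₀ : Measurable y₀) (z : Bool) :
    Measurable (selectedOutcome θ y₁ y₀ z) :=
  Measurable.ite (measurableSet_le measurable_snd measurable_const) (hy₁.comp measurable_fst)
    (hy₀.comp measurable_fst)

lemma selectedOutcome_true_eq_false (hθ : θ false ≤ θ true) {p : ℝ × ℝ}
    (hp : ¬ (θ false < p.2 ∧ p.2 ≤ θ true)) :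
    selectedOutcome θ y₁ y₀ true p = selectedOutcome θ y₁ y₀ false p := by
  unfold selectedOutcome
  by_cases h : p.2 ≤ θ false
  · rw [if_pos (h.trans hθ), if_pos h]
  · rw [if_neg (fun h' => hp ⟨not_le.mp h, h'⟩), if_neg h]

lemma map_complier_eq_of_map_selectedOutcome_eq {Ω : Type*} [MeasurableSpace Ω]
    {P : Measure Ω} [IsFiniteMeasure P] {V η : Ω → ℝ} (hV : Measurable V) (hη : Measurable η)
    (hy₁ : Measurable y₁) (hy₀ : Measurable y₀) (hθ : θ false ≤ θ true)
    (h : P.map (fun ω => selectedOutcome θ y₁ y₀ true (V ω, η ω)) =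
      P.map (fun ω => selectedOutcome θ y₁ y₀ false (V ω, η ω))) :
    ((P.restrict {ω | θ false < η ω ∧ η ω ≤ θ true}).map V).map y₁ =
      ((P.restrict {ω | θ false < η ω ∧ η ω ≤ θ true}).map V).map y₀ := by
  set C := {ω | θ false < η ω ∧ η ω ≤ θ true}
  have hC : MeasurableSet C :=
    (measurableSet_lt measurable_const hη).inter (measurableSet_le hη measurable_const)
  set F := fun z ω => selectedOutcome θ y₁ y₀ z (V ω, η ω)
  have hF : ∀ z, Measurable (F z) :=
    fun z => (measurable_selectedOutcome hy₁ hy₀ z).comp (hV.prodMk hη)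
  ext s hs
  rw [Measure.map_map hy₁ hV, Measure.map_map hy₀ hV, Measure.map_apply (hy₁.comp hV) hs,
    Measure.map_apply (hy₀.comp hV) hs, Measure.restrict_apply' hC, Measure.restrict_apply' hC]
  have hcomplier : ∀ z y, (∀ ω ∈ C, F z ω = y (V ω)) → F z ⁻¹' s ∩ C = (y ∘ V) ⁻¹' s ∩ C :=
    fun z y hzy => by ext ω; simp +contextual [hzy]
  rw [← hcomplier true y₁ fun ω hω => if_pos hω.2,
    ← hcomplier false y₀ fun ω hω => if_neg (not_le.mpr hω.1)]
  refine measure_inter_eq_of_diff_eq hC ?_ ?_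
  · rw [← Measure.map_apply (hF true) hs, h, Measure.map_apply (hF false) hs]
  · ext ω
    exact and_congr_left fun hω => by
      simp only [mem_preimage, F, selectedOutcome_true_eq_false (p := (V ω, η ω)) hθ hω]

end SelectedOutcome

theorem conditional_indep_implies_homogeneous_general
    {Ω : Type*} [MeasurableSpace Ω] (P : Measure Ω) [IsProbabilityMeasure P]
    {E : Type*} [MeasurableSpace E]
    (Y : Ω → ℝ) (D Z : Ω → Bool) (ε : Ω → E) (η : Ω → ℝ)
    (gt : Bool → ℝ → ℝ) (ν : E → ℝ) (θ : Bool → ℝ)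
    (hmeas : Measurable Y ∧ Measurable D ∧ Measurable Z ∧ Measurable ε ∧
      Measurable η ∧ Measurable ν)
    -- single-index monotone outcome equation
    (hgmono : ∀ d, StrictMono (gt d)) (hgcont : ∀ d, Continuous (gt d))
    (hstruct : ∀ ω, Y ω = gt (D ω) (ν (ε ω)))
    -- monotone selection
    (hθ : θ false < θ true)
    (hD : ∀ ω, D ω = true ↔ η ω ≤ θ (Z ω))
    -- instrument exogeneity and nondegeneracy
    (hindep : IndepFun Z (fun ω => (ε ω, η ω)) P)
    (hZ1 : 0 < P {ω | Z ω = true}) (hZ1' : P {ω | Z ω = true} < 1)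
    -- support / effectiveness condition for V = ν ∘ ε
    (hsupp :
      msupport ((P.restrict {ω | θ false < η ω ∧ η ω ≤ θ true}).map (fun ω => ν (ε ω))) =
      msupport (P.map (fun ω => ν (ε ω))))
    -- the Wald ratio δ and the generated variable W
    (δ : ℝ)
    (W : Ω → ℝ)
    (hW : ∀ ω, W ω = Y ω + (1 - (if D ω then (1:ℝ) else 0)) * δ)
    (hWindep : IndepFun W Z P) :
    ∀ τ ∈ msupport (P.map (fun ω => ν (ε ω))), gt true τ - gt false τ = δ := by
  obtain ⟨-, -, hZm, hεm, hηm, hνm⟩ := hmeas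
  have hy₀ : Continuous fun v => gt false v + δ := (hgcont false).add continuous_const
  set sel := selectedOutcome θ (gt true) fun v => gt false v + δ
  have hsel : ∀ z, Measurable (sel z) :=
    measurable_selectedOutcome (hgcont true).measurable hy₀.measurable
  have hWsel : ∀ ω, W ω = sel (Z ω) (ν (ε ω), η ω) := fun ω => by
    rw [hW, hstruct]
    simp only [sel, selectedOutcome, ← hD]
    cases D ω <;> simp
  have hZX : IndepFun Z (fun ω => (ν (ε ω), η ω)) P :=
    hindep.comp measurable_id (hνm.prodMap measurable_id)
  have hPZ := measure_preimage_ne_zero_of_pos_of_lt_one hZm hZ1 hZ1'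
  have hlaw := map_eq_map_of_indepFun hZX hWindep hWsel ((hνm.comp hεm).prodMk hηm) hsel
    (hPZ true) (hPZ false)
  have hcompliers := map_complier_eq_of_map_selectedOutcome_eq (hνm.comp hεm) hηm
    (hgcont true).measurable hy₀.measurable hθ.le hlaw
  intro τ hτ
  rw [← hsupp] at hτ
  linarith [eq_of_map_eq_of_mem_msupport (hgmono true) ((hgmono false).add_const δ) (hgcont true)
    hy₀ hcompliers hτ]

/-- Sufficiency direction of Theorem 1 (no covariates): if `W = Y + (1-D)·δ`
is independent of `Z`, then treatment effects are homogeneous on the support of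
the index `V = ν(ε)`. -/
theorem conditional_indep_implies_homogeneous
    {Ω : Type*} [MeasurableSpace Ω] (P : Measure Ω) [IsProbabilityMeasure P]
    {E : Type*} [MeasurableSpace E]
    (Y : Ω → ℝ) (D Z : Ω → Bool) (ε : Ω → E) (η : Ω → ℝ)
    (gt : Bool → ℝ → ℝ) (ν : E → ℝ) (θ : Bool → ℝ)
    (hmeas : Measurable Y ∧ Measurable D ∧ Measurable Z ∧ Measurable ε ∧
      Measurable η ∧ Measurable ν)
    (hYint : Integrable Y P)
    -- single-index monotone outcome equation
    (hgmono : ∀ d, StrictMono (gt d)) (hgcont : ∀ d, Continuous (gt d))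
    (hstruct : ∀ ω, Y ω = gt (D ω) (ν (ε ω)))
    -- monotone selection
    (hθ : θ false < θ true)
    (hD : ∀ ω, D ω = true ↔ η ω ≤ θ (Z ω))
    -- instrument exogeneity and nondegeneracy
    (hindep : IndepFun Z (fun ω => (ε ω, η ω)) P)
    (hZ1 : 0 < P {ω | Z ω = true}) (hZ1' : P {ω | Z ω = true} < 1)
    (hrel :
      (P {ω | D ω = true ∧ Z ω = true}).toReal / (P {ω | Z ω = true}).toReal ≠
      (P {ω | D ω = true ∧ Z ω = false}).toReal / (P {ω | Z ω = false}).toReal)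
    -- support / effectiveness condition for V = ν ∘ ε
    (hsupp :
      msupport ((P.restrict {ω | θ false < η ω ∧ η ω ≤ θ true}).map (fun ω => ν (ε ω))) =
      msupport (P.map (fun ω => ν (ε ω))))
    (hinterval : (msupport (P.map (fun ω => ν (ε ω)))).OrdConnected)
    (hFc : StrictMonoOn
      (fun τ => (P {ω | ν (ε ω) ≤ τ ∧ θ false < η ω ∧ η ω ≤ θ true}).toReal)
      (msupport (P.map (fun ω => ν (ε ω)))))
    -- the Wald ratio δ and the generated variable W
    (δ : ℝ)
    (hδ : δ =
      ((∫ ω in {ω | Z ω = true}, Y ω ∂P) / (P {ω | Z ω = true}).toReal -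
        (∫ ω in {ω | Z ω = false}, Y ω ∂P) / (P {ω | Z ω = false}).toReal) /
      ((P {ω | D ω = true ∧ Z ω = true}).toReal / (P {ω | Z ω = true}).toReal -
        (P {ω | D ω = true ∧ Z ω = false}).toReal / (P {ω | Z ω = false}).toReal))
    (W : Ω → ℝ)
    (hW : ∀ ω, W ω = Y ω + (1 - (if D ω then (1:ℝ) else 0)) * δ)
    (hWindep : IndepFun W Z P) :
    ∀ τ ∈ msupport (P.map (fun ω => ν (ε ω))), gt true τ - gt false τ = δ :=
  conditional_indep_implies_homogeneous_general P Y D Z ε η gt ν θ hmeas hgmono hgcont hstruct hθ hD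
    hindep hZ1 hZ1' hsupp δ W hW hWindep
end

section
/- Let W₀, W₁ be integrable real random variables with the property that E[max(w − W₀, 0)] = E[max(w − W₁, 0)] for all w ∈ ℝ. Then W₀ and W₁ have the same distribution, i.e., P(W₀ ≤ w) = P(W₁ ≤ w) for every w ∈ ℝ. -/
/-!
For a law `μ` on `ℝ` with finite mean, the shortfall function `S w = ∫ max (w - x) 0 ∂μ` has
right derivative `F w = μ (Iic w)` at every `w`: for `w ≤ t` the increment `S t - S w` lies between
`(t - w) * F w` and `(t - w) * F t`, and `F` is right-continuous. So equal shortfall functions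
have equal CDFs, hence equal laws.
-/

open MeasureTheory ProbabilityTheory Set Filter Topology

noncomputable def shortfall (μ : Measure ℝ) (w : ℝ) : ℝ := ∫ x, max (w - x) 0 ∂μ

lemma indicator_le_max_sub_sub_max {w t : ℝ} (hwt : w ≤ t) (x : ℝ) :
    (Iic w).indicator (fun _ ↦ t - w) x ≤ max (t - x) 0 - max (w - x) 0 := by
  simp only [indicator_apply, mem_Iic]
  split_ifs <;> grind

lemma max_sub_sub_max_le_indicator {w t : ℝ} (hwt : w ≤ t) (x : ℝ) :
    max (t - x) 0 - max (w - x) 0 ≤ (Iic t).indicator (fun _ ↦ t - w) x := by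
  simp only [indicator_apply, mem_Iic]
  split_ifs <;> grind

section Shortfall

variable {μ : Measure ℝ} [IsFiniteMeasure μ]

lemma integrable_max_const_sub (hμ : Integrable id μ) (w : ℝ) :
    Integrable (fun x ↦ max (w - x) 0) μ :=
  ((integrable_const w).sub hμ).pos_part

lemma shortfall_sub_shortfall (hμ : Integrable id μ) (w t : ℝ) :
    shortfall μ t - shortfall μ w = ∫ x, (max (t - x) 0 - max (w - x) 0) ∂μ :=
  (integral_sub (integrable_max_const_sub hμ t) (integrable_max_const_sub hμ w)).symm

lemma mul_measureReal_Iic_le_shortfall_sub (hμ : Integrable id μ) {w t : ℝ} (hwt : w ≤ t) :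
    (t - w) * μ.real (Iic w) ≤ shortfall μ t - shortfall μ w := by
  rw [shortfall_sub_shortfall hμ, mul_comm, ← smul_eq_mul,
    ← integral_indicator_const _ measurableSet_Iic]
  exact integral_mono ((integrable_const _).indicator measurableSet_Iic)
    ((integrable_max_const_sub hμ t).sub (integrable_max_const_sub hμ w))
    (indicator_le_max_sub_sub_max hwt)

lemma shortfall_sub_le_mul_measureReal_Iic (hμ : Integrable id μ) {w t : ℝ} (hwt : w ≤ t) :
    shortfall μ t - shortfall μ w ≤ (t - w) * μ.real (Iic t) := by
  rw [shortfall_sub_shortfall hμ, mul_comm, ← smul_eq_mul,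
    ← integral_indicator_const _ measurableSet_Iic]
  exact integral_mono ((integrable_max_const_sub hμ t).sub (integrable_max_const_sub hμ w))
    ((integrable_const _).indicator measurableSet_Iic)
    (max_sub_sub_max_le_indicator hwt)

end Shortfall

lemma hasDerivWithinAt_shortfall {μ : Measure ℝ} [IsProbabilityMeasure μ]
    (hμ : Integrable id μ) (w : ℝ) : HasDerivWithinAt (shortfall μ) (cdf μ w) (Ioi w) w := by
  rw [hasDerivWithinAt_iff_tendsto_slope' self_notMem_Ioi]
  have hcdf : Tendsto (cdf μ) (𝓝[>] w) (𝓝 (cdf μ w)) :=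
    ((cdf μ).right_continuous w).mono Ioi_subset_Ici_self
  refine tendsto_of_tendsto_of_tendsto_of_le_of_le' tendsto_const_nhds hcdf ?_ ?_
  all_goals
    filter_upwards [self_mem_nhdsWithin] with t (ht : w < t)
    rw [slope_def_field, cdf_eq_real]
  · exact (le_div_iff₀' (sub_pos.2 ht)).2 (mul_measureReal_Iic_le_shortfall_sub hμ ht.le)
  · exact (div_le_iff₀' (sub_pos.2 ht)).2 (shortfall_sub_le_mul_measureReal_Iic hμ ht.le)

lemma MeasureTheory.Measure.eq_of_shortfall_eq {μ ν : Measure ℝ} [IsProbabilityMeasure μ]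
    [IsProbabilityMeasure ν] (hμ : Integrable id μ) (hν : Integrable id ν)
    (h : shortfall μ = shortfall ν) : μ = ν := by
  refine Measure.eq_of_cdf μ ν (StieltjesFunction.ext fun w ↦ ?_)
  refine (uniqueDiffWithinAt_Ioi w).eq_deriv _ (hasDerivWithinAt_shortfall hμ w) ?_
  exact h ▸ hasDerivWithinAt_shortfall hν w

section Map

variable {Ω : Type*} [MeasurableSpace Ω] {P : Measure Ω} {W : Ω → ℝ}

lemma integrable_id_map (hW : Measurable W) (hint : Integrable W P) :
    Integrable id (P.map W) :=
  (integrable_map_measure aestronglyMeasurable_id hW.aemeasurable).2 hint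

lemma shortfall_map (hW : Measurable W) (w : ℝ) :
    shortfall (P.map W) w = ∫ ω, max (w - W ω) 0 ∂P :=
  integral_map hW.aemeasurable (by fun_prop)

end Map

/-- Equality of the expected-shortfall functions for all `w` implies equality
of the CDFs, i.e. of the distributions. -/
theorem equal_shortfall_implies_equal_cdf
    {Ω : Type*} [MeasurableSpace Ω] (P : Measure Ω) [IsProbabilityMeasure P]
    (W₀ W₁ : Ω → ℝ) (hW₀ : Measurable W₀) (hW₁ : Measurable W₁)
    (hint₀ : Integrable W₀ P) (hint₁ : Integrable W₁ P)
    (hshortfall : ∀ w : ℝ,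
      (∫ ω, max (w - W₀ ω) 0 ∂P) = ∫ ω, max (w - W₁ ω) 0 ∂P) :
    ∀ w : ℝ, P {ω | W₀ ω ≤ w} = P {ω | W₁ ω ≤ w} := by
  have := Measure.isProbabilityMeasure_map (μ := P) hW₀.aemeasurable
  have := Measure.isProbabilityMeasure_map (μ := P) hW₁.aemeasurable
  have hlaw : P.map W₀ = P.map W₁ :=
    Measure.eq_of_shortfall_eq (integrable_id_map hW₀ hint₀) (integrable_id_map hW₁ hint₁)
      (funext fun w ↦ by rw [shortfall_map hW₀, shortfall_map hW₁, hshortfall])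
  intro w
  change P (W₀ ⁻¹' Iic w) = P (W₁ ⁻¹' Iic w)
  rw [← Measure.map_apply hW₀ measurableSet_Iic, ← Measure.map_apply hW₁ measurableSet_Iic, hlaw]
end

section
/- Let (W, X, Z) be random variables with Z ∈ {0,1}, X real with conditional densities f_{X|Z}(·|z) > 0 for z = 0,1, and W integrable. Define f_{XZ}(x,z) = f_{X|Z}(x|z)·P(Z=z) and G(w,x,z) = E[ max(w−W, 0)·1(X ≤ x, Z = z)·f_{XZ}(X, 1−z) ]. If W is conditionally independent of Z given X, then G(w,x,0) = G(w,x,1) for all w ∈ ℝ and x ∈ ℝ. -/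
/-!
Write `λ = max (w - W) 0` and `ρ_z = f(·, z) P(Z = z)` for the density of the law of `X` on
`{Z = z}`. If `E[λ | X, Z] = E[λ | X] = g(X)`, then the `λ`-weighted law of `X` on `{Z = z}`
has density `g ρ_z`, hence `G(w, x, z) = ∫_{t ≤ x} g(t) ρ_z(t) ρ_{1-z}(t) dt`, which is
symmetric in `z`.
Conditional independence is only available for bounded functions of `W`, so this is done for
`min λ n` and passed to the limit by monotone convergence of lower Lebesgue integrals.
-/

open MeasureTheory ProbabilityTheory Filter Set Topology ENNReal

theorem setLIntegral_ofReal_condExp {Ω : Type*} {m m₀ : MeasurableSpace Ω} {μ : Measure Ω}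
    (hm : m ≤ m₀) [SigmaFinite (μ.trim hm)] {V : Ω → ℝ} (hV : Integrable V μ)
    (hV0 : 0 ≤ᵐ[μ] V) {s : Set Ω} (hs : MeasurableSet[m] s) :
    ∫⁻ ω in s, ENNReal.ofReal ((μ[V|m]) ω) ∂μ = ∫⁻ ω in s, ENNReal.ofReal (V ω) ∂μ := by
  rw [← ofReal_integral_eq_lintegral_ofReal integrable_condExp.integrableOn
      (ae_restrict_of_ae (condExp_nonneg hV0)),
    ← ofReal_integral_eq_lintegral_ofReal hV.integrableOn (ae_restrict_of_ae hV0),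
    setIntegral_condExp hm hV hs]

theorem eq_withDensity_ofReal_of_toReal_eq_setIntegral {α : Type*} [MeasurableSpace α]
    {μ ν : Measure α} [IsFiniteMeasure μ] {φ : α → ℝ} (hφ : Integrable φ ν)
    (hφ0 : 0 ≤ᵐ[ν] φ) (h : ∀ A, MeasurableSet A → (μ A).toReal = ∫ t in A, φ t ∂ν) :
    μ = ν.withDensity fun t => ENNReal.ofReal (φ t) := by
  ext A hA
  rw [withDensity_apply _ hA, ← ofReal_integral_eq_lintegral_ofReal hφ.integrableOn
    (ae_restrict_of_ae hφ0), ← h A hA, ofReal_toReal (measure_ne_top μ A)]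

theorem tendsto_lintegral_ofReal_min_mul {Ω : Type*} [MeasurableSpace Ω] {μ : Measure Ω}
    {V : Ω → ℝ} (hV : AEMeasurable V μ) {ψ : Ω → ℝ≥0∞} (hψ : AEMeasurable ψ μ) :
    Tendsto (fun n : ℕ => ∫⁻ ω, ENNReal.ofReal (min (V ω) n) * ψ ω ∂μ) atTop
      (𝓝 (∫⁻ ω, ENNReal.ofReal (V ω) * ψ ω ∂μ)) := by
  refine lintegral_tendsto_of_tendsto_of_monotone
    (fun n => (hV.min aemeasurable_const).ennreal_ofReal.mul hψ) (ae_of_all _ fun ω => ?_)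
    (ae_of_all _ fun ω => tendsto_const_nhds.congr' ?_)
  · exact fun m n hmn =>
      mul_le_mul_left (ofReal_le_ofReal (min_le_min_left _ (by exact_mod_cast hmn))) _
  · filter_upwards [eventually_ge_atTop ⌈V ω⌉₊] with n hn
    rw [min_eq_left ((Nat.le_ceil _).trans (Nat.cast_le.mpr hn))]

theorem map_restrict_eq_withDensity_of_toReal_eq {Ω α β : Type*} [MeasurableSpace Ω]
    [MeasurableSpace α] {P : Measure Ω} [IsFiniteMeasure P] {X : Ω → α} {Z : Ω → β}
    {ν : Measure α} (hX : Measurable X) {z : β} (hPz : P {ω | Z ω = z} ≠ 0) {f : α → ℝ}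
    (hf0 : ∀ t, 0 ≤ f t)
    (hden : ∀ A, MeasurableSet A → (P ({ω | X ω ∈ A} ∩ {ω | Z ω = z})).toReal =
      (P {ω | Z ω = z}).toReal * ∫ t in A, f t ∂ν) :
    Measure.map X (P.restrict {ω | Z ω = z}) =
      ν.withDensity fun t => ENNReal.ofReal (f t * (P {ω | Z ω = z}).toReal) := by
  have hc : (P {ω | Z ω = z}).toReal ≠ 0 := toReal_ne_zero.mpr ⟨hPz, measure_ne_top P _⟩
  have hf_one : ∫ t, f t ∂ν = 1 := by
    have := hden univ MeasurableSet.univ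
    simp only [mem_univ, ofPred_true, univ_inter, Measure.restrict_univ] at this
    exact (mul_eq_left₀ hc).mp this.symm
  refine eq_withDensity_ofReal_of_toReal_eq_setIntegral
    ((Integrable.of_integral_ne_zero (μ := ν) (by simp [hf_one])).mul_const _)
    (ae_of_all _ fun t => mul_nonneg (hf0 t) toReal_nonneg) fun A hA => ?_
  rw [Measure.map_apply hX hA, Measure.restrict_apply (hX hA), integral_mul_const, mul_comm]
  exact hden A hA

section CondIndep

variable {Ω α β : Type*} [MeasurableSpace Ω] [MeasurableSpace α] [MeasurableSpace β]
  [MeasurableSingletonClass β] {P : Measure Ω} [IsFiniteMeasure P] {X : Ω → α} {Z : Ω → β}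
  {V : Ω → ℝ} {g : α → ℝ}

theorem map_withDensity_restrict_eq_withDensity_of_condExp_eq (hX : Measurable X)
    (hZ : Measurable Z) (hV : Integrable V P) (hV0 : 0 ≤ᵐ[P] V)
    (hCI : P[V | MeasurableSpace.comap (fun ω => (X ω, Z ω)) inferInstance] =ᵐ[P]
      P[V | MeasurableSpace.comap X inferInstance])
    (hg : Measurable g) (hgV : P[V | MeasurableSpace.comap X inferInstance] = g ∘ X) (z : β) :
    Measure.map X ((P.restrict {ω | Z ω = z}).withDensity fun ω => ENNReal.ofReal (V ω)) =
      (Measure.map X (P.restrict {ω | Z ω = z})).withDensity fun t => ENNReal.ofReal (g t) := by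
  ext A hA
  have hAz : MeasurableSet[MeasurableSpace.comap (fun ω => (X ω, Z ω)) inferInstance]
      (X ⁻¹' A ∩ {ω | Z ω = z}) :=
    ⟨A ×ˢ {z}, hA.prod (measurableSet_singleton z), by ext; simp⟩
  rw [Measure.map_apply hX hA, withDensity_apply _ (hX hA), withDensity_apply _ hA,
    setLIntegral_map hA hg.ennreal_ofReal hX, Measure.restrict_restrict (hX hA),
    ← setLIntegral_ofReal_condExp (hX.prodMk hZ).comap_le hV hV0 hAz]
  refine lintegral_congr_ae (ae_restrict_of_ae ?_)
  filter_upwards [hCI] with ω hω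
  rw [hω, hgV, Function.comp_apply]

theorem setLIntegral_ofReal_mul_comp_eq (hX : Measurable X)
    (hZ : Measurable Z) (hV : Integrable V P) (hV0 : 0 ≤ᵐ[P] V)
    (hCI : P[V | MeasurableSpace.comap (fun ω => (X ω, Z ω)) inferInstance] =ᵐ[P]
      P[V | MeasurableSpace.comap X inferInstance])
    (hg : Measurable g) (hgV : P[V | MeasurableSpace.comap X inferInstance] = g ∘ X)
    {ψ : α → ℝ≥0∞} (hψ : Measurable ψ) {s : Set α} (hs : MeasurableSet s) (z : β) :
    ∫⁻ ω in X ⁻¹' s ∩ {ω | Z ω = z}, ENNReal.ofReal (V ω) * ψ (X ω) ∂P =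
      ∫⁻ t in s, ENNReal.ofReal (g t) * ψ t ∂(Measure.map X (P.restrict {ω | Z ω = z})) := by
  have hVm := (hV.aemeasurable.ennreal_ofReal.restrict (s := {ω | Z ω = z})).restrict
    (s := X ⁻¹' s)
  calc ∫⁻ ω in X ⁻¹' s ∩ {ω | Z ω = z}, ENNReal.ofReal (V ω) * ψ (X ω) ∂P
      = ∫⁻ ω in X ⁻¹' s, ψ (X ω)
          ∂(P.restrict {ω | Z ω = z}).withDensity fun ω => ENNReal.ofReal (V ω) := by
        rw [restrict_withDensity (hX hs), lintegral_withDensity_eq_lintegral_mul₀ hVm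
          (g := fun ω => ψ (X ω)) (hψ.comp hX).aemeasurable, Measure.restrict_restrict (hX hs)]
        rfl
    _ = ∫⁻ t in s, ψ t ∂(Measure.map X (P.restrict {ω | Z ω = z})).withDensity
          fun t => ENNReal.ofReal (g t) := by
        rw [← setLIntegral_map hs hψ hX,
          map_withDensity_restrict_eq_withDensity_of_condExp_eq hX hZ hV hV0 hCI hg hgV]
    _ = _ := setLIntegral_withDensity_eq_setLIntegral_mul _ hg.ennreal_ofReal hψ hs

theorem setLIntegral_ofReal_mul_density_symm (hX : Measurable X)
    (hZ : Measurable Z) (hV : Integrable V P) (hV0 : 0 ≤ᵐ[P] V)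
    (hCI : P[V | MeasurableSpace.comap (fun ω => (X ω, Z ω)) inferInstance] =ᵐ[P]
      P[V | MeasurableSpace.comap X inferInstance])
    {ν : Measure α} {z₁ z₂ : β} {ρ₁ ρ₂ : α → ℝ≥0∞} (hρ₁ : Measurable ρ₁) (hρ₂ : Measurable ρ₂)
    (h₁ : Measure.map X (P.restrict {ω | Z ω = z₁}) = ν.withDensity ρ₁)
    (h₂ : Measure.map X (P.restrict {ω | Z ω = z₂}) = ν.withDensity ρ₂)
    {s : Set α} (hs : MeasurableSet s) :
    ∫⁻ ω in X ⁻¹' s ∩ {ω | Z ω = z₁}, ENNReal.ofReal (V ω) * ρ₂ (X ω) ∂P =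
      ∫⁻ ω in X ⁻¹' s ∩ {ω | Z ω = z₂}, ENNReal.ofReal (V ω) * ρ₁ (X ω) ∂P := by
  obtain ⟨g, hg, hgV⟩ := (stronglyMeasurable_condExp (f := V) (μ := P)
    (m := MeasurableSpace.comap X inferInstance)).exists_eq_measurable_comp
  rw [setLIntegral_ofReal_mul_comp_eq hX hZ hV hV0 hCI hg.measurable hgV hρ₂ hs,
    setLIntegral_ofReal_mul_comp_eq hX hZ hV hV0 hCI hg.measurable hgV hρ₁ hs, h₁, h₂,
    setLIntegral_withDensity_eq_setLIntegral_mul _ hρ₁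
      (g := fun t => ENNReal.ofReal (g t) * ρ₂ t) (hg.measurable.ennreal_ofReal.mul hρ₂) hs,
    setLIntegral_withDensity_eq_setLIntegral_mul _ hρ₂
      (g := fun t => ENNReal.ofReal (g t) * ρ₁ t) (hg.measurable.ennreal_ofReal.mul hρ₁) hs]
  refine lintegral_congr fun t => ?_
  simp only [Pi.mul_apply]
  ring

theorem setLIntegral_ofReal_comp_mul_density_symm {γ : Type*} [MeasurableSpace γ] {W : Ω → γ}
    (hX : Measurable X) (hZ : Measurable Z) (hW : Measurable W)
    (hCI : ∀ h : γ → ℝ, Measurable h → (∃ C, ∀ t, |h t| ≤ C) →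
      P[(fun ω => h (W ω)) | MeasurableSpace.comap (fun ω => (X ω, Z ω)) inferInstance] =ᵐ[P]
      P[(fun ω => h (W ω)) | MeasurableSpace.comap X inferInstance])
    {h : γ → ℝ} (hh : Measurable h) (hh0 : ∀ t, 0 ≤ h t)
    {ν : Measure α} {z₁ z₂ : β} {ρ₁ ρ₂ : α → ℝ≥0∞} (hρ₁ : Measurable ρ₁) (hρ₂ : Measurable ρ₂)
    (h₁ : Measure.map X (P.restrict {ω | Z ω = z₁}) = ν.withDensity ρ₁)
    (h₂ : Measure.map X (P.restrict {ω | Z ω = z₂}) = ν.withDensity ρ₂)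
    {s : Set α} (hs : MeasurableSet s) :
    ∫⁻ ω in X ⁻¹' s ∩ {ω | Z ω = z₁}, ENNReal.ofReal (h (W ω)) * ρ₂ (X ω) ∂P =
      ∫⁻ ω in X ⁻¹' s ∩ {ω | Z ω = z₂}, ENNReal.ofReal (h (W ω)) * ρ₁ (X ω) ∂P := by
  have htrunc (n : ℕ) :
      ∫⁻ ω in X ⁻¹' s ∩ {ω | Z ω = z₁}, ENNReal.ofReal (min (h (W ω)) n) * ρ₂ (X ω) ∂P =
        ∫⁻ ω in X ⁻¹' s ∩ {ω | Z ω = z₂}, ENNReal.ofReal (min (h (W ω)) n) * ρ₁ (X ω) ∂P := by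
    have hm : Measurable fun t => min (h t) n := hh.min measurable_const
    have hb : ∀ t, |min (h t) n| ≤ n := fun t => by
      rw [abs_of_nonneg (le_min (hh0 t) n.cast_nonneg)]
      exact min_le_right _ _
    exact setLIntegral_ofReal_mul_density_symm hX hZ
      (.of_bound (hm.comp hW).aestronglyMeasurable n (ae_of_all _ fun ω => hb _))
      (ae_of_all _ fun ω => le_min (hh0 _) n.cast_nonneg)
      (hCI _ hm ⟨n, hb⟩) hρ₁ hρ₂ h₁ h₂ hs
  exact tendsto_nhds_unique
    ((tendsto_lintegral_ofReal_min_mul (hh.comp hW).aemeasurable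
      (hρ₂.comp hX).aemeasurable).congr htrunc)
    (tendsto_lintegral_ofReal_min_mul (hh.comp hW).aemeasurable (hρ₁.comp hX).aemeasurable)

end CondIndep

theorem integral_mul_ite_mul_eq_toReal_setLIntegral {Ω β : Type*} [MeasurableSpace Ω]
    [MeasurableSpace β] [MeasurableSingletonClass β] [DecidableEq β] {P : Measure Ω}
    {X : Ω → ℝ} {Z : Ω → β} (hX : Measurable X) (hZ : Measurable Z) {V : Ω → ℝ}
    (hVm : Measurable V) (hV0 : ∀ ω, 0 ≤ V ω) {q : ℝ → ℝ} (hq : Measurable q)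
    (hq0 : ∀ t, 0 ≤ q t) (x : ℝ) (z : β) :
    ∫ ω, V ω * (if X ω ≤ x ∧ Z ω = z then (1 : ℝ) else 0) * q (X ω) ∂P =
      (∫⁻ ω in X ⁻¹' Iic x ∩ {ω | Z ω = z},
        ENNReal.ofReal (V ω) * ENNReal.ofReal (q (X ω)) ∂P).toReal := by
  have hS : MeasurableSet (X ⁻¹' Iic x ∩ {ω | Z ω = z}) :=
    (hX measurableSet_Iic).inter (hZ (measurableSet_singleton z))
  have hnonneg : ∀ ω, 0 ≤ V ω * (if X ω ≤ x ∧ Z ω = z then (1 : ℝ) else 0) * q (X ω) :=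
    fun ω => mul_nonneg (mul_nonneg (hV0 ω) (by split_ifs <;> norm_num)) (hq0 _)
  rw [integral_eq_lintegral_of_nonneg_ae (ae_of_all _ hnonneg)
    ((hVm.mul (measurable_const.ite hS measurable_const)).mul
      (hq.comp hX)).aestronglyMeasurable, ← lintegral_indicator hS]
  congr 1
  refine lintegral_congr fun ω => ?_
  by_cases h : X ω ≤ x ∧ Z ω = z
  · rw [if_pos h, indicator_of_mem (show ω ∈ X ⁻¹' Iic x ∩ {ω | Z ω = z} from h), mul_one,
      ofReal_mul (hV0 ω)]
  · rw [if_neg h, indicator_of_notMem (show ω ∉ X ⁻¹' Iic x ∩ {ω | Z ω = z} from h), mul_zero,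
      zero_mul, ofReal_zero]

theorem condIndep_implies_G_equal_general
    {Ω : Type*} [MeasurableSpace Ω] (P : Measure Ω) [IsProbabilityMeasure P]
    (W X : Ω → ℝ) (Z : Ω → Bool)
    (hWm : Measurable W) (hXm : Measurable X) (hZm : Measurable Z)
    (hZ1 : 0 < P {ω | Z ω = true}) (hZ1' : P {ω | Z ω = true} < 1)
    -- conditional densities of X given Z
    (f : ℝ → Bool → ℝ)
    (hfm : ∀ z, Measurable fun x => f x z)
    (hfpos : ∀ x z, 0 < f x z)
    (hden : ∀ (z : Bool) (A : Set ℝ), MeasurableSet A →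
      (P ({ω | X ω ∈ A} ∩ {ω | Z ω = z})).toReal =
        (P {ω | Z ω = z}).toReal * ∫ x in A, f x z)
    -- conditional independence of W and Z given X
    (hCI : ∀ h : ℝ → ℝ, Measurable h → (∃ C, ∀ t, |h t| ≤ C) →
      P[(fun ω => h (W ω)) |
          MeasurableSpace.comap (fun ω => (X ω, Z ω)) inferInstance] =ᵐ[P]
      P[(fun ω => h (W ω)) | MeasurableSpace.comap X inferInstance])
    -- the contrast function G
    (G : ℝ → ℝ → Bool → ℝ)
    (hG : ∀ (w x : ℝ) (z : Bool),
      G w x z = ∫ ω, max (w - W ω) 0 *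
        (if X ω ≤ x ∧ Z ω = z then (1:ℝ) else 0) *
        (f (X ω) (!z) * (P {ω' | Z ω' = !z}).toReal) ∂P) :
    ∀ (w x : ℝ), G w x false = G w x true := by
  intro w x
  have hhinge : Measurable fun t => max (w - t) 0 :=
    (measurable_const.sub measurable_id).max measurable_const
  have hPz : ∀ z, P {ω | Z ω = z} ≠ 0
    | true => hZ1.ne'
    | false => by
      have hT : MeasurableSet {ω | Z ω = true} := hZm (measurableSet_singleton true)
      rw [show {ω | Z ω = false} = {ω | Z ω = true}ᶜ by ext; simp, prob_compl_eq_one_sub hT]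
      exact (tsub_pos_of_lt hZ1').ne'
  set ρ : Bool → ℝ → ℝ≥0∞ := fun z t => ENNReal.ofReal (f t z * (P {ω | Z ω = z}).toReal)
  have hρm : ∀ z, Measurable (ρ z) := fun z => ((hfm z).mul_const _).ennreal_ofReal
  have hlaw : ∀ z, Measure.map X (P.restrict {ω | Z ω = z}) = volume.withDensity (ρ z) :=
    fun z => map_restrict_eq_withDensity_of_toReal_eq hXm (hPz z) (fun t => (hfpos t z).le)
      (hden z)
  have hGL : ∀ z, G w x z = (∫⁻ ω in X ⁻¹' Iic x ∩ {ω | Z ω = z},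
      ENNReal.ofReal (max (w - W ω) 0) * ρ (!z) (X ω) ∂P).toReal := fun z => by
    rw [hG]
    exact integral_mul_ite_mul_eq_toReal_setLIntegral hXm hZm (hhinge.comp hWm)
      (fun ω => le_max_right _ _) ((hfm _).mul_const _)
      (fun t => mul_nonneg (hfpos t _).le toReal_nonneg) x z
  rw [hGL, hGL]
  exact congrArg ENNReal.toReal <| setLIntegral_ofReal_comp_mul_density_symm hXm hZm hWm hCI
    hhinge (fun t => le_max_right _ _) (hρm false) (hρm true) (hlaw false) (hlaw true)
    measurableSet_Iic

/-- If `W ⊥ Z | X`, then the unconditional contrast functions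
`G(w,x,0)` and `G(w,x,1)` coincide. -/
theorem condIndep_implies_G_equal
    {Ω : Type*} [MeasurableSpace Ω] (P : Measure Ω) [IsProbabilityMeasure P]
    (W X : Ω → ℝ) (Z : Ω → Bool)
    (hWm : Measurable W) (hXm : Measurable X) (hZm : Measurable Z)
    (hWint : Integrable W P)
    (hZ1 : 0 < P {ω | Z ω = true}) (hZ1' : P {ω | Z ω = true} < 1)
    -- conditional densities of X given Z
    (f : ℝ → Bool → ℝ)
    (hfm : ∀ z, Measurable fun x => f x z)
    (hfpos : ∀ x z, 0 < f x z)
    (hden : ∀ (z : Bool) (A : Set ℝ), MeasurableSet A →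
      (P ({ω | X ω ∈ A} ∩ {ω | Z ω = z})).toReal =
        (P {ω | Z ω = z}).toReal * ∫ x in A, f x z)
    -- conditional independence of W and Z given X
    (hCI : ∀ h : ℝ → ℝ, Measurable h → (∃ C, ∀ t, |h t| ≤ C) →
      P[(fun ω => h (W ω)) |
          MeasurableSpace.comap (fun ω => (X ω, Z ω)) inferInstance] =ᵐ[P]
      P[(fun ω => h (W ω)) | MeasurableSpace.comap X inferInstance])
    -- the contrast function G
    (G : ℝ → ℝ → Bool → ℝ)
    (hG : ∀ (w x : ℝ) (z : Bool),
      G w x z = ∫ ω, max (w - W ω) 0 *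
        (if X ω ≤ x ∧ Z ω = z then (1:ℝ) else 0) *
        (f (X ω) (!z) * (P {ω' | Z ω' = !z}).toReal) ∂P) :
    ∀ (w x : ℝ), G w x false = G w x true :=
  condIndep_implies_G_equal_general P W X Z hWm hXm hZm hZ1 hZ1' f hfm hfpos hden hCI G hG
end
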